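/- Let v, E, B, Ẽ, B̃ be vectors in Euclidean 3-space with ⟨v, e₃⟩ = 0, Eᵢ = Ẽᵢ and Bᵢ = B̃ᵢ for i = 1,2, and Ẽ₃ = (v × B̃)₃, B̃₃ = −(v × Ẽ)₃. Then |E|² + |B|² + 2⟨E × B, v⟩ − (|Ẽ|² + |B̃|² + 2⟨Ẽ × B̃, v⟩) = (E₃ − Ẽ₃)² + (B₃ − B̃₃)². -/
import Mathlib

/-- Euclidean dot product on `Fin 3 → ℝ`. -/
def dot3 (a b : Fin 3 → ℝ) : ℝ := a 0 * b 0 + a 1 * b 1 + a 2 * b 2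

/-- The deformation of the electromagnetic field changes the energy-momentum
combination `|E|² + |B|² + 2⟨E × B, v⟩` by exactly the nonnegative amount
`(E₃ − Ẽ₃)² + (B₃ − B̃₃)²`. -/
theorem stmt_3 (v E B tE tB : Fin 3 → ℝ) (hv : v 2 = 0)
    (hE0 : tE 0 = E 0) (hE1 : tE 1 = E 1)
    (hB0 : tB 0 = B 0) (hB1 : tB 1 = B 1)
    (hE3 : tE 2 = (crossProduct v tB) 2)
    (hB3 : tB 2 = -((crossProduct v tE) 2)) :
    dot3 E E + dot3 B B + 2 * dot3 (crossProduct E B) v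
      - (dot3 tE tE + dot3 tB tB + 2 * dot3 (crossProduct tE tB) v)
      = (E 2 - tE 2) ^ 2 + (B 2 - tB 2) ^ 2 := by
  simp only [crossProduct, LinearMap.mk₂_apply, Matrix.cons_val_zero, Matrix.cons_val_one,
    Matrix.head_cons, Matrix.cons_val_two, Matrix.tail_cons, dot3] at *
  simp only [hE0, hE1, hB0, hB1] at hE3 hB3 ⊢
  rw [hE3, hB3, hv]
  ring
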